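/- Let f̂ < 0 have nonempty level set X̂ = { x | f(x) = f̂ }, and suppose the Radial Subgradient Method has γ_{z_i}(x̃_{i+1}) > 0 for all i ≤ k. Then 2·∑_{i=0}^{k} α_i·(f̂/z_i)·((z_i − f̂)/(0 − z_i)) ≤ dist(0, X̂)² + ∑_{i=0}^{k} α_i²·(f̂/z_i)²·‖ζ_i‖², where dist(0, X̂) is the infimum of ‖x‖ over x ∈ X̂. -/

import Mathlib

open Filter

/-- The perspective function `f^p(x, γ) = γ · f(x/γ)` of `f`, for `γ > 0`. -/
noncomputable def perspective {n : ℕ} (f : EuclideanSpace ℝ (Fin n) → EReal)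
    (x : EuclideanSpace ℝ (Fin n)) (γ : ℝ) : EReal :=
  (γ : EReal) * f (γ⁻¹ • x)

/-- The radial reformulation of `f` of level `z`:
`γ_z(x) = inf { γ > 0 | f^p(x, γ) ≤ z }`. -/
noncomputable def radial {n : ℕ} (f : EuclideanSpace ℝ (Fin n) → EReal)
    (z : ℝ) (x : EuclideanSpace ℝ (Fin n)) : ℝ :=
  sInf {γ : ℝ | 0 < γ ∧ perspective f x γ ≤ (z : EReal)}

/-- `f : ℝⁿ → ℝ ∪ {∞}` is lower-semicontinuous and convex, never `-∞`, with
`0` in the interior of its effective domain and `f(0) < 0`. -/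
structure GoodFun {n : ℕ} (f : EuclideanSpace ℝ (Fin n) → EReal) : Prop where
  proper : ∀ x, f x ≠ ⊥
  lsc : LowerSemicontinuous f
  convexEpi : Convex ℝ {p : EuclideanSpace ℝ (Fin n) × ℝ | f p.1 ≤ (p.2 : EReal)}
  zero_mem : (0 : EuclideanSpace ℝ (Fin n)) ∈ interior {x | f x ≠ ⊤}
  neg_at_zero : f 0 < 0

/-- `ζ` is a subgradient of `g` at `x`. -/
def IsSubgradient {n : ℕ} (g : EuclideanSpace ℝ (Fin n) → ℝ)
    (x ζ : EuclideanSpace ℝ (Fin n)) : Prop :=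
  ∀ y, g x + (inner ℝ ζ (y - x) : ℝ) ≤ g y

/-- The Radial Subgradient Method with positive step sizes `α`:
`x 0 = 0`, `z 0 = f 0`; at iteration `i`, `ζ i` is a subgradient of `γ_{z i}` at `x i`,
`xt (i+1) = x i - α i • ζ i`, and whenever `γ_{z i}(xt (i+1)) > 0`,
`(x (i+1), z (i+1)) = (xt (i+1), z i) / γ_{z i}(xt (i+1))`. -/
structure RSM {n : ℕ} (f : EuclideanSpace ℝ (Fin n) → EReal) (α : ℕ → ℝ)
    (x xt : ℕ → EuclideanSpace ℝ (Fin n)) (z : ℕ → ℝ)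
    (ζ : ℕ → EuclideanSpace ℝ (Fin n)) : Prop where
  step_pos : ∀ i, 0 < α i
  init_x : x 0 = 0
  init_z : f 0 = ((z 0 : ℝ) : EReal)
  subgrad : ∀ i, IsSubgradient (radial f (z i)) (x i) (ζ i)
  tilde : ∀ i, xt (i + 1) = x i - α i • ζ i
  update_x : ∀ i, 0 < radial f (z i) (xt (i + 1)) →
    x (i + 1) = (radial f (z i) (xt (i + 1)))⁻¹ • xt (i + 1)
  update_z : ∀ i, 0 < radial f (z i) (xt (i + 1)) →
    z (i + 1) = z i / radial f (z i) (xt (i + 1))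

/-! With `w i = (f̂ / z i) • x i`, the scaled iterate lies on the same radial ray as `x i`, and
since `γ_{z i}(x i) = 1` and `γ_{z i}((z i / f̂) • ŷ) ≤ z i / f̂` for `ŷ ∈ X̂`, the subgradient
inequality gives `(z i - f̂) / (0 - z i) ≤ ⟪ζ i, w i - ŷ⟫`. The update of the method makes `w` an
ordinary subgradient step `w (i+1) = w i - (α i · f̂ / z i) • ζ i`, so the classical expansion of
`‖w (i+1) - ŷ‖²` telescopes from `w 0 = 0`; minimizing over `ŷ ∈ X̂` gives `dist(0, X̂)²`. -/

lemma EReal.coe_mul_le_coe_mul_iff {c : ℝ} (hc : 0 < c) {a b : EReal} :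
    (c : EReal) * a ≤ (c : EReal) * b ↔ a ≤ b := by
  refine ⟨fun h ↦ ?_, fun h ↦ mul_le_mul_of_nonneg_left h (by exact_mod_cast hc.le)⟩
  have h' := mul_le_mul_of_nonneg_left h (show (0 : EReal) ≤ ((c⁻¹ : ℝ) : EReal) by
    exact_mod_cast (inv_pos.mpr hc).le)
  rwa [← mul_assoc, ← mul_assoc, ← EReal.coe_mul, inv_mul_cancel₀ hc.ne', EReal.coe_one,
    one_mul, one_mul] at h'

lemma le_infDist_sq_of_forall_le {X : Type*} [PseudoMetricSpace X] {x : X} {s : Set X} {c : ℝ}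
    (hs : s.Nonempty) (h : ∀ y ∈ s, c ≤ dist x y ^ 2) : c ≤ Metric.infDist x s ^ 2 := by
  have hsqrt : √c ≤ Metric.infDist x s :=
    (Metric.le_infDist hs).2 fun y hy ↦ (Real.sqrt_le_left dist_nonneg).2 (h y hy)
  exact (Real.sqrt_le_left Metric.infDist_nonneg).1 hsqrt

lemma norm_sub_smul_sub_sq_le {E : Type*} [NormedAddCommGroup E] [InnerProductSpace ℝ E]
    {w g y : E} {t c : ℝ} (ht : 0 ≤ t) (hc : c ≤ inner ℝ g (w - y)) :
    ‖w - t • g - y‖ ^ 2 ≤ ‖w - y‖ ^ 2 - 2 * t * c + t ^ 2 * ‖g‖ ^ 2 := by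
  have hexpand :
      ‖w - t • g - y‖ ^ 2 = ‖w - y‖ ^ 2 - 2 * t * inner ℝ g (w - y) + t ^ 2 * ‖g‖ ^ 2 := by
    rw [sub_right_comm, norm_sub_sq_real, real_inner_smul_right, norm_smul, real_inner_comm,
      Real.norm_eq_abs, abs_of_nonneg ht]
    ring
  rw [hexpand]
  linarith [mul_le_mul_of_nonneg_left hc ht]

section Radial

variable {n : ℕ} {f : EuclideanSpace ℝ (Fin n) → EReal}

lemma radial_zero_of_eq {z : ℝ} (hz : z < 0) (hf0 : f 0 = z) : radial f z 0 = 1 := by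
  have hset : {γ : ℝ | 0 < γ ∧ perspective f 0 γ ≤ (z : EReal)} = Set.Ici 1 := by
    ext γ
    simp only [Set.mem_ofPred_eq, perspective, smul_zero, hf0, Set.mem_Ici, ← EReal.coe_mul,
      EReal.coe_le_coe_iff]
    constructor
    · rintro ⟨hγ, h⟩
      nlinarith
    · intro h
      exact ⟨by linarith, by nlinarith⟩
  rw [radial, hset, csInf_Ici]

open Pointwise in
lemma radial_div_inv_smul {c : ℝ} (hc : 0 < c) (z : ℝ) (x : EuclideanSpace ℝ (Fin n)) :
    radial f (z / c) (c⁻¹ • x) = c⁻¹ * radial f z x := by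
  have hset : {γ : ℝ | 0 < γ ∧ perspective f (c⁻¹ • x) γ ≤ ((z / c : ℝ) : EReal)}
      = c⁻¹ • {γ : ℝ | 0 < γ ∧ perspective f x γ ≤ (z : EReal)} := by
    ext γ
    rw [Set.mem_smul_set_iff_inv_smul_mem₀ (inv_ne_zero hc.ne')]
    simp only [Set.mem_ofPred_eq, inv_inv, smul_eq_mul, perspective, smul_smul, ← mul_inv,
      mul_comm γ c]
    have hscale :
        (c : EReal) * ((γ : EReal) * f ((c * γ)⁻¹ • x)) ≤ (c : EReal) * ((z / c : ℝ) : EReal)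
        ↔ ((c * γ : ℝ) : EReal) * f ((c * γ)⁻¹ • x) ≤ z := by
      rw [← mul_assoc, ← EReal.coe_mul, ← EReal.coe_mul, mul_div_cancel₀ _ hc.ne']
    rw [← EReal.coe_mul_le_coe_mul_iff hc, hscale]
    exact and_congr_left fun _ ↦ ⟨fun hγ ↦ mul_pos hc hγ, fun hcγ ↦ pos_of_mul_pos_right hcγ hc.le⟩
  rw [radial, hset, radial, Real.sInf_smul_of_nonneg (inv_nonneg.mpr hc.le), smul_eq_mul]

lemma radial_div_smul_le {z fhat : ℝ} (hz : z < 0) (hfhat : fhat < 0)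
    {y : EuclideanSpace ℝ (Fin n)} (hy : f y = fhat) :
    radial f z ((z / fhat) • y) ≤ z / fhat := by
  have hpos : 0 < z / fhat := div_pos_of_neg_of_neg hz hfhat
  refine csInf_le ⟨0, fun γ hγ ↦ hγ.1.le⟩ ⟨hpos, ?_⟩
  rw [perspective, smul_smul, inv_mul_cancel₀ hpos.ne', one_smul, hy, ← EReal.coe_mul,
    EReal.coe_le_coe_iff, div_mul_cancel₀ _ hfhat.ne]

lemma IsSubgradient.radial_gap_le_inner {z fhat : ℝ} (hz : z < 0) (hfhat : fhat < 0)
    {x ζ y : EuclideanSpace ℝ (Fin n)} (hζ : IsSubgradient (radial f z) x ζ)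
    (hx : radial f z x = 1) (hy : f y = fhat) :
    (z - fhat) / (0 - z) ≤ inner ℝ ζ ((fhat / z) • x - y) := by
  have hb : 0 < fhat / z := div_pos_of_neg_of_neg hfhat hz
  have hbs : fhat / z * (z / fhat) = 1 := by
    rw [div_mul_div_comm, mul_comm, div_self (mul_ne_zero hz.ne hfhat.ne)]
  have hsub : inner ℝ ζ ((z / fhat) • y - x) ≤ z / fhat - 1 := by
    linarith [hζ ((z / fhat) • y), radial_div_smul_le hz hfhat hy]
  have hgap : (z - fhat) / (0 - z) = fhat / z - 1 := by
    rw [zero_sub, div_neg, ← neg_div, neg_sub, sub_div, div_self hz.ne]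
  rw [inner_sub_right, real_inner_smul_right] at hsub
  have hscaled := mul_le_mul_of_nonneg_left hsub hb.le
  rw [mul_sub, mul_sub, ← mul_assoc, hbs, one_mul, mul_one] at hscaled
  rw [hgap, inner_sub_right, real_inner_smul_right]
  linarith

end Radial

namespace RSM

variable {n : ℕ} {f : EuclideanSpace ℝ (Fin n) → EReal} {α : ℕ → ℝ}
  {x xt : ℕ → EuclideanSpace ℝ (Fin n)} {z : ℕ → ℝ} {ζ : ℕ → EuclideanSpace ℝ (Fin n)}
  {k : ℕ}

lemma level_neg (hrsm : RSM f α x xt z ζ) (hf0 : f 0 < 0)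
    (hpos : ∀ i ≤ k, 0 < radial f (z i) (xt (i + 1))) : ∀ i ≤ k + 1, z i < 0 := by
  intro i hi
  induction i with
  | zero => rw [hrsm.init_z] at hf0; exact_mod_cast hf0
  | succ j ih =>
    have hj := Nat.le_of_succ_le_succ hi
    rw [hrsm.update_z j (hpos j hj)]
    exact div_neg_of_neg_of_pos (ih (by omega)) (hpos j hj)

lemma radial_iterate_eq_one (hrsm : RSM f α x xt z ζ) (hz0 : z 0 < 0)
    (hpos : ∀ i ≤ k, 0 < radial f (z i) (xt (i + 1))) :
    ∀ i ≤ k + 1, radial f (z i) (x i) = 1 := by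
  intro i hi
  induction i with
  | zero => rw [hrsm.init_x]; exact radial_zero_of_eq hz0 hrsm.init_z
  | succ j ih =>
    have hc := hpos j (Nat.le_of_succ_le_succ hi)
    rw [hrsm.update_z j hc, hrsm.update_x j hc, radial_div_inv_smul hc, inv_mul_cancel₀ hc.ne']

lemma div_smul_succ (hrsm : RSM f α x xt z ζ) (fhat : ℝ) {i : ℕ}
    (hc : 0 < radial f (z i) (xt (i + 1))) :
    (fhat / z (i + 1)) • x (i + 1) = (fhat / z i) • x i - (α i * (fhat / z i)) • ζ i := by
  have hcoef : fhat / z (i + 1) * (radial f (z i) (xt (i + 1)))⁻¹ = fhat / z i := by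
    rw [hrsm.update_z i hc, div_div_eq_mul_div, mul_div_right_comm, mul_assoc,
      mul_inv_cancel₀ hc.ne', mul_one]
  rw [hrsm.update_x i hc, smul_smul, hcoef, hrsm.tilde i, smul_sub, smul_smul, mul_comm]

lemma sum_le_norm_sq_add (hrsm : RSM f α x xt z ζ) {fhat : ℝ} (hfhat : fhat < 0)
    (hz : ∀ i ≤ k, z i < 0) (hr : ∀ i ≤ k, radial f (z i) (x i) = 1)
    (hpos : ∀ i ≤ k, 0 < radial f (z i) (xt (i + 1)))
    {y : EuclideanSpace ℝ (Fin n)} (hy : f y = fhat) :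
    2 * ∑ i ∈ Finset.range (k + 1), α i * (fhat / z i) * ((z i - fhat) / (0 - z i)) ≤
      ‖y‖ ^ 2 + ∑ i ∈ Finset.range (k + 1), α i ^ 2 * (fhat / z i) ^ 2 * ‖ζ i‖ ^ 2 := by
  set d : ℕ → ℝ := fun i ↦ ‖(fhat / z i) • x i - y‖ ^ 2
  have hstep : ∀ i ∈ Finset.range (k + 1),
      2 * (α i * (fhat / z i) * ((z i - fhat) / (0 - z i))) ≤
        d i - d (i + 1) + α i ^ 2 * (fhat / z i) ^ 2 * ‖ζ i‖ ^ 2 := by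
    intro i hi
    have hik := Nat.lt_succ_iff.mp (Finset.mem_range.mp hi)
    have ht : 0 ≤ α i * (fhat / z i) :=
      (mul_pos (hrsm.step_pos i) (div_pos_of_neg_of_neg hfhat (hz i hik))).le
    have hdesc := norm_sub_smul_sub_sq_le ht
      ((hrsm.subgrad i).radial_gap_le_inner (hz i hik) hfhat (hr i hik) hy)
    simp only [d, hrsm.div_smul_succ fhat (hpos i hik)]
    linarith [mul_pow (α i) (fhat / z i) 2]
  have hd0 : d 0 = ‖y‖ ^ 2 := by simp [d, hrsm.init_x]
  calc 2 * ∑ i ∈ Finset.range (k + 1), α i * (fhat / z i) * ((z i - fhat) / (0 - z i))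
      ≤ ∑ i ∈ Finset.range (k + 1), (d i - d (i + 1) + α i ^ 2 * (fhat / z i) ^ 2 * ‖ζ i‖ ^ 2) := by
        rw [Finset.mul_sum]; exact Finset.sum_le_sum hstep
    _ = d 0 - d (k + 1) + ∑ i ∈ Finset.range (k + 1), α i ^ 2 * (fhat / z i) ^ 2 * ‖ζ i‖ ^ 2 := by
        rw [Finset.sum_add_distrib, Finset.sum_range_sub']
    _ ≤ ‖y‖ ^ 2 + ∑ i ∈ Finset.range (k + 1), α i ^ 2 * (fhat / z i) ^ 2 * ‖ζ i‖ ^ 2 := by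
        linarith [sq_nonneg ‖(fhat / z (k + 1)) • x (k + 1) - y‖]

end RSM

/-- **Key summed inequality (3.4).** Let `f̂ < 0` have nonempty level set
`X̂ = {x | f x = f̂}`, and suppose `γ_{z_i}(x̃_{i+1}) > 0` for all `i ≤ k`. Then
`2·∑_{i=0}^{k} α_i·(f̂/z_i)·((z_i - f̂)/(0 - z_i)) ≤ dist(0, X̂)²
  + ∑_{i=0}^{k} α_i²·(f̂/z_i)²·‖ζ_i‖²`. -/
theorem summed_subgradient_inequality {n : ℕ}
    (f : EuclideanSpace ℝ (Fin n) → EReal) (hf : GoodFun f)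
    (α : ℕ → ℝ) (x xt : ℕ → EuclideanSpace ℝ (Fin n)) (z : ℕ → ℝ)
    (ζ : ℕ → EuclideanSpace ℝ (Fin n)) (hrsm : RSM f α x xt z ζ)
    (fhat : ℝ) (hfhat : fhat < 0)
    (hXhat : {y : EuclideanSpace ℝ (Fin n) | f y = ((fhat : ℝ) : EReal)}.Nonempty)
    (k : ℕ) (hpos : ∀ i ≤ k, 0 < radial f (z i) (xt (i + 1))) :
    2 * ∑ i ∈ Finset.range (k + 1), α i * (fhat / z i) * ((z i - fhat) / (0 - z i)) ≤
      Metric.infDist (0 : EuclideanSpace ℝ (Fin n)) {y | f y = ((fhat : ℝ) : EReal)} ^ 2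
        + ∑ i ∈ Finset.range (k + 1), α i ^ 2 * (fhat / z i) ^ 2 * ‖ζ i‖ ^ 2 := by
  have hz := hrsm.level_neg hf.neg_at_zero hpos
  have hr := hrsm.radial_iterate_eq_one (hz 0 (Nat.zero_le _)) hpos
  refine sub_le_iff_le_add.1 (le_infDist_sq_of_forall_le hXhat fun y hy ↦ ?_)
  rw [dist_zero_left, sub_le_iff_le_add]
  exact hrsm.sum_le_norm_sq_add hfhat (fun i hi ↦ hz i (by omega)) (fun i hi ↦ hr i (by omega))
    hpos hy
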